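/- arXiv:1903.06102 — 3 statements merged into one kernel-verified Lean document; each statement's English description precedes it below -/
import Mathlib

section
/- The set D+K of operators on a separable Hilbert space that can be written as the sum of a diagonal operator (with respect to a fixed orthonormal basis) and a compact operator is norm-closed in B(H). -/
open scoped InnerProductSpace
open ContinuousLinearMap

variable {H : Type*} [NormedAddCommGroup H] [InnerProductSpace ℂ H] [CompleteSpace H]

/-- An operator is diagonal with respect to the fixed orthonormal (Hilbert) basis `e`. -/
def IsDiagonal (e : HilbertBasis ℕ ℂ H) (T : H →L[ℂ] H) : Prop :=
  ∀ n m : ℕ, n ≠ m → ⟪e m, T (e n)⟫_ℂ = 0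

/-- The set `D + K` of sums of a diagonal operator and a compact operator. -/
def DplusK (e : HilbertBasis ℕ ℂ H) : Set (H →L[ℂ] H) :=
  {T | ∃ D K : H →L[ℂ] H, IsDiagonal e D ∧ IsCompactOperator ⇑K ∧ T = D + K}

/-! The conditional expectation `Δ` onto the diagonal is a bounded linear map that fixes diagonal
operators and sends compact operators to compact ones. For the latter: the functionals `⟪eᵢ, ·⟫`
are 1-Lipschitz and tend to `0` pointwise, hence uniformly on the compact set containing the image
of the unit ball under a compact `K`, so the diagonal entries `⟪eᵢ, K eᵢ⟫` tend to `0`; and a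
diagonal operator with null entries is a norm limit of finite-rank ones. Hence `T ∈ D + K` iff
`T - Δ T` is compact, a closed condition since `Δ` is continuous and the compact operators are
closed. -/

open scoped ENNReal Topology lp
open Filter

namespace lp

variable {ι 𝕜 : Type*} [RCLike 𝕜] {p : ℝ≥0∞}

lemma norm_infty_mul_apply_le (a : ℓ^∞(ι, 𝕜)) (f : lp (fun _ : ι => 𝕜) p) (i : ι) :
    ‖a i * f i‖ ≤ ‖a‖ * ‖f i‖ := by
  rw [norm_mul]
  gcongr
  exact norm_apply_le_norm ENNReal.top_ne_zero a i

lemma memℓp_infty_mul (a : ℓ^∞(ι, 𝕜)) (f : lp (fun _ : ι => 𝕜) p) : Memℓp (⇑a * ⇑f) p :=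
  ((lp.memℓp f).norm.const_mul ‖a‖).mono (norm_infty_mul_apply_le a f)

noncomputable def inftyMulCLM [Fact (1 ≤ p)] :
    ℓ^∞(ι, 𝕜) →L[𝕜] lp (fun _ : ι => 𝕜) p →L[𝕜] lp (fun _ : ι => 𝕜) p :=
  LinearMap.mkContinuous₂
    (LinearMap.mk₂ 𝕜 (fun a f => ⟨⇑a * ⇑f, memℓp_infty_mul a f⟩)
      (fun _ _ _ => lp.ext <| funext fun _ => add_mul _ _ _)
      (fun c a f => lp.ext <| funext fun i => smul_mul_assoc c (a i) (f i))
      (fun _ _ _ => lp.ext <| funext fun _ => mul_add _ _ _)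
      (fun c a f => lp.ext <| funext fun i => mul_smul_comm c (a i) (f i)))
    1 fun a f => by
      have hp : p ≠ 0 := (zero_lt_one.trans_le Fact.out).ne'
      rw [one_mul]
      calc _ ≤ ‖(‖a‖ : 𝕜) • f‖ := norm_mono hp fun i => by
            rw [coeFn_smul, Pi.smul_apply, norm_smul, RCLike.norm_ofReal, abs_norm]
            exact norm_infty_mul_apply_le a f i
        _ = ‖a‖ * ‖f‖ := by rw [norm_const_smul hp, RCLike.norm_ofReal, abs_norm]

@[simp] lemma inftyMulCLM_apply_apply [Fact (1 ≤ p)] (a : ℓ^∞(ι, 𝕜)) (f : lp (fun _ : ι => 𝕜) p)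
    (i : ι) :
    inftyMulCLM (𝕜 := 𝕜) (p := p) a f i = a i * f i := rfl

section Single

variable {ι : Type*} {E : ι → Type*} [∀ i, NormedAddCommGroup (E i)] [DecidableEq ι]

theorem tendsto_sum_single_infty {a : lp E ∞} (ha : Tendsto (fun i => ‖a i‖) cofinite (𝓝 0)) :
    Tendsto (fun s : Finset ι => ∑ i ∈ s, lp.single ∞ i (a i)) atTop (𝓝 a) := by
  rw [Metric.tendsto_atTop]
  intro ε hε
  have hfin := eventually_cofinite.1 (ha.eventually (gt_mem_nhds (half_pos hε)))
  refine ⟨hfin.toFinset, fun s hs => ?_⟩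
  rw [dist_eq_norm]
  refine (norm_le_of_forall_le (half_pos hε).le fun j => ?_).trans_lt (half_lt_self hε)
  simp only [coeFn_sub, coeFn_sum, Pi.sub_apply, Finset.sum_apply, lp.single_apply,
    Finset.sum_pi_single]
  split_ifs with hj
  · simpa using (half_pos hε).le
  · rw [zero_sub, _root_.norm_neg]
    by_contra! hlt
    exact hj (hs (hfin.mem_toFinset.2 (not_lt.2 hlt.le)))

end Single

end lp

namespace HilbertBasis

variable {ι 𝕜 E : Type*} [RCLike 𝕜] [NormedAddCommGroup E] [InnerProductSpace 𝕜 E]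
  (e : HilbertBasis ι 𝕜 E)

noncomputable def diagonal : ℓ^∞(ι, 𝕜) →L[𝕜] E →L[𝕜] E :=
  (e.repr.symm.toContinuousLinearEquiv.arrowCongr e.repr.symm.toContinuousLinearEquiv
    : (ℓ²(ι, 𝕜) →L[𝕜] ℓ²(ι, 𝕜)) →L[𝕜] E →L[𝕜] E) ∘L lp.inftyMulCLM

@[simp] lemma repr_diagonal_apply (a : ℓ^∞(ι, 𝕜)) (x : E) (i : ι) :
    e.repr (e.diagonal a x) i = a i * e.repr x i := by
  simp [diagonal]

lemma diagonal_apply_self (a : ℓ^∞(ι, 𝕜)) (i : ι) : e.diagonal a (e i) = a i • e i := by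
  classical
  refine e.repr.injective (lp.ext <| funext fun j => ?_)
  simp only [repr_diagonal_apply, e.repr_self, map_smul, lp.coeFn_smul, Pi.smul_apply, smul_eq_mul,
    lp.single_apply, Pi.single_apply]
  split_ifs with h <;> simp [h]

lemma inner_diagonal_apply_self_of_ne (a : ℓ^∞(ι, 𝕜)) {i j : ι} (hij : i ≠ j) :
    ⟪e j, e.diagonal a (e i)⟫_𝕜 = 0 := by
  rw [diagonal_apply_self, inner_smul_right, e.orthonormal.inner_eq_zero hij.symm, mul_zero]

lemma isCompactOperator_diagonal_single [DecidableEq ι] (i : ι) (c : 𝕜) :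
    IsCompactOperator (e.diagonal (lp.single ∞ i c)) := by
  have h : e.diagonal (lp.single ∞ i c) = .toSpanSingleton 𝕜 (c • e i) ∘L innerSL 𝕜 (e i) := by
    ext x
    refine e.repr.injective (lp.ext <| funext fun j => ?_)
    simp only [repr_diagonal_apply, lp.single_apply, Pi.single_apply, coe_comp, Function.comp_apply,
      innerSL_apply_apply, toSpanSingleton_apply, map_smul, e.repr_self, lp.coeFn_smul,
      Pi.smul_apply, smul_eq_mul]
    split_ifs with h <;> simp [h, e.repr_apply_apply, mul_comm]
  rw [h]
  exact (isCompactOperator_of_locallyCompactSpace_dom (innerSL 𝕜 (e i))).clm_comp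
    (toSpanSingleton 𝕜 (c • e i))

theorem isCompactOperator_diagonal [CompleteSpace E] {a : ℓ^∞(ι, 𝕜)}
    (ha : Tendsto (fun i => ‖a i‖) cofinite (𝓝 0)) : IsCompactOperator (e.diagonal a) := by
  classical
  refine isCompactOperator_of_tendsto
    ((e.diagonal.continuous.tendsto a).comp (lp.tendsto_sum_single_infty ha))
    (Eventually.of_forall fun s => ?_)
  rw [Function.comp_apply, map_sum]
  exact Submodule.sum_mem (compactOperator _ E E) fun i _ => e.isCompactOperator_diagonal_single i _

lemma norm_inner_apply_self_le (T : E →L[𝕜] E) (i : ι) : ‖⟪e i, T (e i)⟫_𝕜‖ ≤ ‖T‖ := by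
  calc ‖⟪e i, T (e i)⟫_𝕜‖ ≤ ‖e i‖ * ‖T (e i)‖ := norm_inner_le_norm _ _
    _ ≤ ‖e i‖ * (‖T‖ * ‖e i‖) := by gcongr; exact T.le_opNorm _
    _ = ‖T‖ := by rw [e.orthonormal.1 i, one_mul, mul_one]

noncomputable def diagEntries : (E →L[𝕜] E) →L[𝕜] ℓ^∞(ι, 𝕜) :=
  LinearMap.mkContinuous
    { toFun T := ⟨fun i => ⟪e i, T (e i)⟫_𝕜,
        memℓp_infty ⟨‖T‖, Set.forall_mem_range.2 (e.norm_inner_apply_self_le T)⟩⟩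
      map_add' T S := lp.ext <| funext fun i => inner_add_right _ _ _
      map_smul' c T := lp.ext <| funext fun i => inner_smul_right _ _ _ }
    1 fun T => by
      rw [one_mul]
      exact lp.norm_le_of_forall_le (norm_nonneg T) (e.norm_inner_apply_self_le T)

@[simp] lemma diagEntries_apply (T : E →L[𝕜] E) (i : ι) :
    e.diagEntries T i = ⟪e i, T (e i)⟫_𝕜 := rfl

/-- The conditional expectation `Δ` onto the diagonal operators. -/
noncomputable def diagonalPart : (E →L[𝕜] E) →L[𝕜] E →L[𝕜] E := e.diagonal ∘L e.diagEntries

lemma diagonalPart_apply (T : E →L[𝕜] E) : e.diagonalPart T = e.diagonal (e.diagEntries T) := rfl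

theorem diagonalPart_eq_self {T : E →L[𝕜] E} (hT : ∀ i j, i ≠ j → ⟪e j, T (e i)⟫_𝕜 = 0) :
    e.diagonalPart T = T := by
  classical
  refine ContinuousLinearMap.ext_on
    (Submodule.dense_iff_topologicalClosure_eq_top.2 e.dense_span) ?_
  rintro _ ⟨i, rfl⟩
  refine e.repr.injective (lp.ext <| funext fun j => ?_)
  rw [diagonalPart_apply, repr_diagonal_apply, diagEntries_apply, e.repr_self, e.repr_apply_apply,
    lp.single_apply, Pi.single_apply]
  split_ifs with h
  · rw [h, mul_one]
  · rw [mul_zero, hT i j (Ne.symm h)]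

lemma tendsto_inner_cofinite (x : E) : Tendsto (fun i => ⟪e i, x⟫_𝕜) cofinite (𝓝 0) := by
  rw [tendsto_zero_iff_norm_tendsto_zero]
  simpa using (e.orthonormal.inner_products_summable (x := x)).tendsto_cofinite_zero.sqrt

theorem tendsto_inner_apply_self_of_isCompactOperator {K : E →L[𝕜] E} (hK : IsCompactOperator K) :
    Tendsto (fun i => ⟪e i, K (e i)⟫_𝕜) cofinite (𝓝 0) := by
  obtain ⟨C, hC, hKC⟩ :=
    (show IsCompactOperator (K : E →ₗ[𝕜] E) from hK).image_closedBall_subset_compact 1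
  have : CompactSpace C := isCompact_iff_compactSpace.1 hC
  let F : ι → C → 𝕜 := fun i y => ⟪e i, (y : E)⟫_𝕜
  have hF_lip (i : ι) : LipschitzWith 1 (F i) := LipschitzWith.of_dist_le_mul fun y z => by
    rw [dist_eq_norm, ← inner_sub_right, NNReal.coe_one, one_mul, Subtype.dist_eq, dist_eq_norm]
    simpa [e.orthonormal.1 i] using norm_inner_le_norm (e i) ((y : E) - z)
  have hF : TendstoUniformly F 0 cofinite :=
    UniformFun.tendsto_iff_tendstoUniformly.1
      (((LipschitzWith.uniformEquicontinuous F 1 hF_lip).equicontinuous.tendsto_uniformFun_iff_pi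
        _ _).2 (tendsto_pi_nhds.2 fun y => e.tendsto_inner_cofinite y))
  rw [Metric.tendsto_nhds]
  intro ε hε
  filter_upwards [Metric.tendstoUniformly_iff.1 hF ε hε] with i hi
  have hmem : K (e i) ∈ C := hKC ⟨e i, by simp [e.orthonormal.1 i], rfl⟩
  simpa [dist_comm] using hi ⟨K (e i), hmem⟩

theorem isCompactOperator_diagonalPart [CompleteSpace E] {K : E →L[𝕜] E}
    (hK : IsCompactOperator K) : IsCompactOperator (e.diagonalPart K) :=
  e.isCompactOperator_diagonal
    (tendsto_zero_iff_norm_tendsto_zero.1 (e.tendsto_inner_apply_self_of_isCompactOperator hK))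

end HilbertBasis

theorem DplusK_eq_setOf_isCompactOperator_sub_diagonalPart (e : HilbertBasis ℕ ℂ H) :
    DplusK e = {T | IsCompactOperator (T - e.diagonalPart T)} := by
  ext T
  constructor
  · rintro ⟨D, K, hD, hK, rfl⟩
    rw [Set.mem_ofPred_eq, map_add, e.diagonalPart_eq_self hD, add_sub_add_left_eq_sub]
    exact hK.sub (e.isCompactOperator_diagonalPart hK)
  · exact fun hT => ⟨e.diagonalPart T, T - e.diagonalPart T,
      fun _ _ => e.inner_diagonal_apply_self_of_ne _, hT, (add_sub_cancel _ _).symm⟩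

theorem DplusK_isClosed (e : HilbertBasis ℕ ℂ H) : IsClosed (DplusK e) := by
  rw [DplusK_eq_setOf_isCompactOperator_sub_diagonalPart]
  exact isClosed_setOfPred_isCompactOperator.preimage (continuous_id.sub e.diagonalPart.continuous)
end

section
/- If T ∈ D+K is invertible in B(H), then there exists a decomposition T = D₀ + K₀ with D₀ diagonal and invertible and K₀ compact. -/
open scoped InnerProductSpace
open ContinuousLinearMap

variable {H : Type*} [NormedAddCommGroup H] [InnerProductSpace ℂ H] [CompleteSpace H]

open Filter Topology
open scoped lp

/-!
Write `T = D + K` with `D (e n) = d n • e n`. Since `K` is compact, `K (e n) → 0`, while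
`‖T (e n)‖ ≥ ‖T⁻¹‖⁻¹`; hence `‖d n‖ ≥ (2 ‖T⁻¹‖)⁻¹` for all but finitely many `n`. Replacing the
finitely many remaining diagonal entries by `1` changes `D` by a finite-rank operator, and the new
diagonal operator has entries bounded away from `0`, so it is invertible with a diagonal inverse.
-/

section

variable {ι 𝕜 E F : Type*} [RCLike 𝕜] [NormedAddCommGroup E] [InnerProductSpace 𝕜 E]
  [NormedAddCommGroup F] [InnerProductSpace 𝕜 F]

theorem Orthonormal.tendsto_inner_cofinite_zero {v : ι → E} (hv : Orthonormal 𝕜 v) (x : E) :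
    Tendsto (fun i => ⟪v i, x⟫_𝕜) cofinite (𝓝 0) := by
  rw [tendsto_zero_iff_norm_tendsto_zero]
  simpa [Real.sqrt_sq (norm_nonneg _)] using
    (hv.inner_products_summable (x := x)).tendsto_cofinite_zero.sqrt

theorem IsCompactOperator.tendsto_apply_orthonormal [CompleteSpace E] [CompleteSpace F]
    {K : E →L[𝕜] F} (hK : IsCompactOperator K) {v : ℕ → E} (hv : Orthonormal 𝕜 v) :
    Tendsto (fun n => K (v n)) atTop (𝓝 0) := by
  refine tendsto_of_subseq_tendsto fun ns hns => ?_
  obtain ⟨y, -, ms, hms, hy⟩ := (hK.isCompact_closure_image_closedBall 1).tendsto_subseq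
    (x := fun n => K (v (ns n))) fun n => subset_closure ⟨v (ns n), by simp [hv.1], rfl⟩
  refine ⟨ms, ?_⟩
  suffices y = 0 from this ▸ hy
  -- `v` is weakly null by Bessel's inequality, and `⟪K (v n), y⟫ = ⟪v n, K† y⟫`.
  have hweak : Tendsto (fun n => ⟪K (v (ns (ms n))), y⟫_𝕜) atTop (𝓝 0) := by
    simp only [← adjoint_inner_right]
    exact (Nat.cofinite_eq_atTop ▸ hv.tendsto_inner_cofinite_zero _).comp
      (hns.comp hms.tendsto_atTop)
  exact inner_self_eq_zero.1 (tendsto_nhds_unique (hy.inner tendsto_const_nhds) hweak)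

theorem Orthonormal.exists_pos_eventually_le_norm_of_isUnit_add [CompleteSpace E] {v : ℕ → E}
    (hv : Orthonormal 𝕜 v) {D K : E →L[𝕜] E} {d : ℕ → 𝕜} (hD : ∀ n, D (v n) = d n • v n)
    (hK : IsCompactOperator K) (hT : IsUnit (D + K)) : ∃ δ > 0, ∀ᶠ n in atTop, δ ≤ ‖d n‖ := by
  obtain ⟨u, hu⟩ := hT
  set C := ‖(↑u⁻¹ : E →L[𝕜] E)‖
  have hbelow (x : E) : ‖x‖ ≤ C * ‖(D + K) x‖ := by
    calc ‖x‖ = ‖(↑u⁻¹ * ↑u : E →L[𝕜] E) x‖ := by rw [u.inv_mul, one_apply_eq_self]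
      _ = ‖(↑u⁻¹ : E →L[𝕜] E) ((D + K) x)‖ := by rw [← hu]; rfl
      _ ≤ C * ‖(D + K) x‖ := le_opNorm _ _
  have hC : 0 < C := by
    have h := hbelow (v 0)
    rw [hv.1 0] at h
    have hC0 : 0 ≤ C := norm_nonneg _
    nlinarith [norm_nonneg ((D + K) (v 0))]
  refine ⟨(2 * C)⁻¹, by positivity, ?_⟩
  have hsmall : ∀ᶠ n in atTop, ‖K (v n)‖ ≤ (2 * C)⁻¹ :=
    (hK.tendsto_apply_orthonormal hv).norm.eventually (ge_mem_nhds (by rw [norm_zero]; positivity))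
  filter_upwards [hsmall] with n hn
  have h := hbelow (v n)
  rw [hv.1 n, add_apply, hD] at h
  have key : 1 ≤ C * ‖d n‖ + 1 / 2 :=
    calc 1 ≤ C * ‖d n • v n + K (v n)‖ := h
      _ ≤ C * (‖d n‖ + (2 * C)⁻¹) := by grw [norm_add_le, norm_smul, hv.1 n, mul_one, hn]
      _ = C * ‖d n‖ + 1 / 2 := by field_simp
  rw [inv_le_iff_one_le_mul₀ (by positivity)]
  linarith

namespace HilbertBasis

variable (e : HilbertBasis ι 𝕜 E)

theorem ext_clm {A B : E →L[𝕜] E} (h : ∀ i, A (e i) = B (e i)) : A = B :=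
  ext_on (Submodule.dense_iff_topologicalClosure_eq_top.mpr e.dense_span)
    (by rintro _ ⟨i, rfl⟩; exact h i)

theorem exists_apply_eq_smul {w : ι → 𝕜} {C : ℝ} (hw : ∀ i, ‖w i‖ ≤ C) :
    ∃ M : E →L[𝕜] E, ∀ i, M (e i) = w i • e i := by
  classical
  have hmem (f : ℓ²(ι, 𝕜)) : Memℓp (w * ⇑f) 2 :=
    ((lp.memℓp f).norm.const_mul C).mono fun i => by
      simpa [norm_mul] using mul_le_mul_of_nonneg_right (hw i) (norm_nonneg (f i))
  let mul : ℓ²(ι, 𝕜) →ₗ[𝕜] ℓ²(ι, 𝕜) :=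
    { toFun f := ⟨w * ⇑f, hmem f⟩
      map_add' f g := lp.ext (mul_add w f g)
      map_smul' c f := lp.ext (mul_smul_comm c w f) }
  have hbound (f : ℓ²(ι, 𝕜)) : ‖mul f‖ ≤ ‖(C : 𝕜)‖ * ‖f‖ := by
    rw [← lp.norm_const_smul two_ne_zero]
    refine lp.norm_mono two_ne_zero fun i => ?_
    change ‖w i * f i‖ ≤ ‖(C : 𝕜) • f i‖
    rw [norm_mul, norm_smul, RCLike.norm_ofReal]
    gcongr
    exact (hw i).trans (le_abs_self C)
  refine ⟨(e.repr.symm : ℓ²(ι, 𝕜) →L[𝕜] E) ∘L mul.mkContinuous _ hbound ∘L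
    (e.repr : E →L[𝕜] ℓ²(ι, 𝕜)), fun i => e.repr.injective ?_⟩
  ext j
  by_cases hji : j = i <;> simp [mul, e.repr_self, lp.single_apply, hji]

theorem exists_isCompactOperator_apply_eq_smul {w : ι → 𝕜} (hw : (Function.support w).Finite) :
    ∃ P : E →L[𝕜] E, IsCompactOperator P ∧ ∀ i, P (e i) = w i • e i := by
  classical
  refine ⟨∑ j ∈ hw.toFinset, w j • (toSpanSingleton 𝕜 (e j)).comp (innerSL 𝕜 (e j)), ?_,
    fun i => ?_⟩
  · refine (compactOperator (RingHom.id 𝕜) E E : Submodule 𝕜 (E →L[𝕜] E)).sum_mem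
      fun j _ => Submodule.smul_mem _ (w j) ?_
    exact (isCompactOperator_of_locallyCompactSpace_dom (innerSL 𝕜 (e j))).clm_comp
      (toSpanSingleton 𝕜 (e j))
  · simp +contextual [orthonormal_iff_ite.mp e.orthonormal]

theorem isUnit_of_apply_eq_smul {A : E →L[𝕜] E} {w : ι → 𝕜} (hA : ∀ i, A (e i) = w i • e i)
    {δ : ℝ} (hδ : 0 < δ) (hw : ∀ i, δ ≤ ‖w i‖) : IsUnit A := by
  have hw0 (i : ι) : w i ≠ 0 := norm_pos_iff.1 (hδ.trans_le (hw i))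
  obtain ⟨M, hM⟩ := e.exists_apply_eq_smul (w := fun i => (w i)⁻¹) (C := δ⁻¹) fun i => by
    rw [norm_inv]; exact inv_anti₀ hδ (hw i)
  refine ⟨⟨A, M, e.ext_clm fun i => ?_, e.ext_clm fun i => ?_⟩, rfl⟩ <;>
    simp [hA, hM, smul_smul, hw0]

end HilbertBasis

end

theorem isDiagonal_iff_exists_apply_eq_smul {E : Type*} [NormedAddCommGroup E]
    [InnerProductSpace ℂ E] {e : HilbertBasis ℕ ℂ E} {D : E →L[ℂ] E} :
    IsDiagonal e D ↔ ∃ d : ℕ → ℂ, ∀ n, D (e n) = d n • e n := by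
  refine ⟨fun hD => ⟨fun n => ⟪e n, D (e n)⟫_ℂ, fun n => e.repr.injective ?_⟩, ?_⟩
  · ext m
    rcases eq_or_ne n m with rfl | hnm
    · simp [e.repr_apply_apply, e.orthonormal.1 n]
    · simp [e.repr_apply_apply, hD n m hnm, orthonormal_iff_ite.mp e.orthonormal, hnm.symm]
  · rintro ⟨d, hd⟩ n m hnm
    simp [hd, orthonormal_iff_ite.mp e.orthonormal, hnm.symm]

/-- If `T ∈ D+K` is invertible, there is a decomposition `T = D₀ + K₀` with `D₀` a diagonal
invertible operator and `K₀` compact. -/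
theorem exists_invertible_diagonal_decomposition (e : HilbertBasis ℕ ℂ H)
    (T : H →L[ℂ] H) (hT : T ∈ DplusK e) (hinv : IsUnit T) :
    ∃ D₀ K₀ : H →L[ℂ] H, IsDiagonal e D₀ ∧ IsUnit D₀ ∧ IsCompactOperator ⇑K₀ ∧ T = D₀ + K₀ := by
  obtain ⟨D, K, hD, hK, rfl⟩ := hT
  obtain ⟨d, hd⟩ := isDiagonal_iff_exists_apply_eq_smul.1 hD
  obtain ⟨δ, hδ, hlarge⟩ := e.orthonormal.exists_pos_eventually_le_norm_of_isUnit_add hd hK hinv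
  let a : ℕ → ℂ := fun n => if δ ≤ ‖d n‖ then 0 else 1 - d n
  have ha : (Function.support a).Finite := by
    rw [← Nat.cofinite_eq_atTop, eventually_cofinite] at hlarge
    exact hlarge.subset fun n hn h => hn (by simp [a, h])
  obtain ⟨P, hP, hPe⟩ := e.exists_isCompactOperator_apply_eq_smul ha
  have hDP (n : ℕ) : (D + P) (e n) = (d n + a n) • e n := by
    rw [add_apply, hd, hPe, add_smul]
  refine ⟨D + P, K - P, isDiagonal_iff_exists_apply_eq_smul.2 ⟨_, hDP⟩,
    e.isUnit_of_apply_eq_smul hDP (lt_min hδ one_pos) fun n => ?_, ?_, by abel⟩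
  · by_cases h : δ ≤ ‖d n‖ <;> simp [a, h]
  · exact hK.sub hP
end

section
/- Every orthogonal projection P ∈ D+K admits a decomposition P = E + K where E is a diagonal orthogonal projection (a diagonal operator with entries in {0,1}) and K is compact. -/
/-!
Write `P = D + K` and let `d n = ⟪e n, D (e n)⟫`. Since `K (e n) → 0` for compact `K`, expanding
`P² (e n) = P (e n)` shows `d n - d n ² → 0`, so rounding each `d n` to the nearer of `0` and `1`
changes it by a null sequence. The diagonal projection `E` with the rounded entries therefore
differs from `D` by a diagonal operator with entries tending to `0`, which is compact as a norm
limit of its finite truncations; hence `P - E = (D - E) + K` is compact.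
-/

open scoped InnerProductSpace
open ContinuousLinearMap

variable {H : Type*} [NormedAddCommGroup H] [InnerProductSpace ℂ H] [CompleteSpace H]

open Filter Topology

theorem norm_sub_round_sq_le {𝕜 : Type*} [NormedField 𝕜] (z : 𝕜) :
    ‖z - if ‖z - 1‖ < ‖z‖ then 1 else 0‖ ^ 2 ≤ ‖z - z ^ 2‖ := by
  have hprod : ‖z - z ^ 2‖ = ‖z‖ * ‖z - 1‖ := by
    rw [← norm_mul, ← norm_neg]; congr 1; ring
  rw [hprod]
  split_ifs with h
  · nlinarith [norm_nonneg (z - 1)]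
  · rw [sub_zero]; nlinarith [norm_nonneg z]

theorem tendsto_sub_round_of_tendsto_sub_sq {𝕜 ι : Type*} [NormedField 𝕜] {l : Filter ι}
    {z : ι → 𝕜} (hz : Tendsto (fun i => z i - z i ^ 2) l (𝓝 0)) :
    Tendsto (fun i => z i - if ‖z i - 1‖ < ‖z i‖ then 1 else 0) l (𝓝 0) := by
  rw [tendsto_zero_iff_norm_tendsto_zero] at hz ⊢
  refine squeeze_zero (fun _ => norm_nonneg _) (fun i => ?_) (by simpa using hz.sqrt)
  exact Real.le_sqrt_of_sq_le (norm_sub_round_sq_le (z i))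

theorem tendsto_sub_sq_of_isIdempotentElem {𝕜 V ι : Type*} [NontriviallyNormedField 𝕜]
    [NormedAddCommGroup V] [NormedSpace 𝕜 V] {l : Filter ι} {D K : V →L[𝕜] V}
    (hP : IsIdempotentElem (D + K)) {v : ι → V} (hv : ∀ i, ‖v i‖ = 1) {d : ι → 𝕜}
    (hD : ∀ i, D (v i) = d i • v i) (hK : Tendsto (fun i => K (v i)) l (𝓝 0)) :
    Tendsto (fun i => d i - d i ^ 2) l (𝓝 0) := by
  have hd : ∀ i, ‖d i‖ ≤ ‖D‖ := fun i => by
    simpa [hD, norm_smul, hv] using D.le_opNorm (v i)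
  have key : ∀ i, (d i - d i ^ 2) • v i = d i • K (v i) + (D + K) (K (v i)) - K (v i) := by
    intro i
    have h := congr($hP (v i))
    simp only [mul_apply_eq_comp, add_apply, hD, map_add, map_smul] at h ⊢
    linear_combination (norm := module) -h
  have hlim : Tendsto (fun i => d i • K (v i) + (D + K) (K (v i)) - K (v i)) l (𝓝 0) := by
    have hsmul := (isBoundedUnder_of ⟨‖D‖, hd⟩).smul_tendsto_zero hK
    simpa using (hsmul.add (((D + K).continuous.tendsto 0).comp hK)).sub hK
  rw [tendsto_zero_iff_norm_tendsto_zero] at hlim ⊢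
  refine hlim.congr fun i => ?_
  rw [← key, norm_smul, hv, mul_one]

namespace HilbertBasis

variable {ι 𝕜 E : Type*} [RCLike 𝕜] [NormedAddCommGroup E] [InnerProductSpace 𝕜 E]

theorem hasSum_norm_inner_sq (b : HilbertBasis ι 𝕜 E) (x : E) :
    HasSum (fun i => ‖⟪b i, x⟫_𝕜‖ ^ 2) (‖x‖ ^ 2) := by
  refine (RCLike.hasSum_ofReal 𝕜).mp ?_
  convert b.hasSum_inner_mul_inner x x using 1
  · ext i
    rw [← inner_conj_symm x, RCLike.conj_mul, RCLike.ofReal_pow]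
  · push_cast
    exact (inner_self_eq_norm_sq_to_K x).symm

theorem tendsto_inner_cofinite_zero (b : HilbertBasis ι 𝕜 E) (x : E) :
    Tendsto (fun i => ⟪x, b i⟫_𝕜) cofinite (𝓝 0) := by
  rw [tendsto_zero_iff_norm_tendsto_zero]
  have := (b.hasSum_norm_inner_sq x).summable.tendsto_cofinite_zero.sqrt
  simpa [norm_inner_symm x] using this

variable [CompleteSpace E]

noncomputable def spanProj (b : HilbertBasis ι 𝕜 E) (S : Set ι) : E →L[𝕜] E :=
  ((Submodule.span 𝕜 (b '' S)).closure : Submodule 𝕜 E).starProjection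

theorem isSelfAdjoint_spanProj (b : HilbertBasis ι 𝕜 E) (S : Set ι) :
    IsSelfAdjoint (b.spanProj S) :=
  isSelfAdjoint_starProjection _

theorem isIdempotentElem_spanProj (b : HilbertBasis ι 𝕜 E) (S : Set ι) :
    IsIdempotentElem (b.spanProj S) :=
  Submodule.isIdempotentElem_starProjection _

theorem spanProj_apply_of_mem (b : HilbertBasis ι 𝕜 E) {S : Set ι} {i : ι} (hi : i ∈ S) :
    b.spanProj S (b i) = b i :=
  Submodule.starProjection_eq_self_iff.mpr
    (subset_closure (Submodule.subset_span ⟨i, hi, rfl⟩))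

theorem spanProj_apply_of_notMem (b : HilbertBasis ι 𝕜 E) {S : Set ι} {i : ι} (hi : i ∉ S) :
    b.spanProj S (b i) = 0 := by
  refine (Submodule.starProjection_apply_eq_zero_iff _).mpr ?_
  rw [ClosedSubmodule.orthogonal_closure]
  refine (Submodule.isOrtho_span.mpr ?_).ge (Submodule.mem_span_singleton_self (b i))
  rintro _ ⟨j, hj, rfl⟩ _ rfl
  exact b.orthonormal.inner_eq_zero (ne_of_mem_of_not_mem hj hi)

end HilbertBasis

theorem IsCompactOperator.tendsto_apply_hilbertBasis {ι 𝕜 E F : Type*} [RCLike 𝕜]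
    [NormedAddCommGroup E] [InnerProductSpace 𝕜 E] [CompleteSpace E]
    [NormedAddCommGroup F] [InnerProductSpace 𝕜 F] [CompleteSpace F]
    {K : E →L[𝕜] F} (hK : IsCompactOperator K) (b : HilbertBasis ι 𝕜 E) :
    Tendsto (fun i => K (b i)) cofinite (𝓝 0) := by
  refine (hK.isCompact_closure_image_closedBall 1).tendsto_nhds_of_unique_mapClusterPt
    (Eventually.of_forall fun i => subset_closure ⟨b i, by simp [b.orthonormal.1 i], rfl⟩) ?_
  intro y _ hy
  refine ext_inner_left 𝕜 fun v => ?_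
  have hv : Tendsto (fun i => ⟪v, K (b i)⟫_𝕜) cofinite (𝓝 0) := by
    simpa only [adjoint_inner_left] using b.tendsto_inner_cofinite_zero (adjoint K v)
  have hy' := hy.tendsto_comp ((innerSL 𝕜 v).continuous.tendsto y)
  rw [inner_zero_right]
  exact eq_of_nhds_neBot (hy'.neBot.mono (inf_le_inf_left _ hv))

theorem GeneralSchauderBasis.isCompactOperator_proj {β 𝕜 X : Type*} [NontriviallyNormedField 𝕜]
    [ProperSpace 𝕜] [NormedAddCommGroup X] [NormedSpace 𝕜 X] {L : SummationFilter β}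
    (b : GeneralSchauderBasis β 𝕜 X L) (A : Finset β) : IsCompactOperator (b.proj A) := by
  refine Finset.sum_induction _ (fun T : X →L[𝕜] X => IsCompactOperator T)
    (fun S T hS hT => hS.add hT) isCompactOperator_zero fun i _ => ?_
  exact (isCompactOperator_of_locallyCompactSpace_dom (b.coord i)).clm_comp
    (toSpanSingleton 𝕜 (b i))

namespace IsDiagonal

variable {E : Type*} [NormedAddCommGroup E] [InnerProductSpace ℂ E] {e : HilbertBasis ℕ ℂ E}
  {S T : E →L[ℂ] E}

theorem of_apply_basis {c : ℕ → ℂ} (hT : ∀ n, T (e n) = c n • e n) : IsDiagonal e T :=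
  fun n m hnm => by rw [hT, inner_smul_right, e.orthonormal.inner_eq_zero hnm.symm, mul_zero]

theorem sub (hS : IsDiagonal e S) (hT : IsDiagonal e T) : IsDiagonal e (S - T) :=
  fun n m hnm => by rw [sub_apply, inner_sub_right, hS n m hnm, hT n m hnm, sub_zero]

theorem apply_basis (hT : IsDiagonal e T) (n : ℕ) : T (e n) = ⟪e n, T (e n)⟫_ℂ • e n := by
  refine e.repr.injective (lp.ext (funext fun m => ?_))
  rw [e.repr_apply_apply, e.repr_apply_apply, inner_smul_right]
  rcases eq_or_ne n m with rfl | hnm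
  · rw [inner_self_eq_norm_sq_to_K, e.orthonormal.1 n]; simp
  · rw [hT n m hnm, e.orthonormal.inner_eq_zero hnm.symm, mul_zero]

variable [CompleteSpace E]

theorem inner_apply (hT : IsDiagonal e T) (n : ℕ) (x : E) :
    ⟪e n, T x⟫_ℂ = ⟪e n, T (e n)⟫_ℂ * ⟪e n, x⟫_ℂ := by
  rw [← adjoint_inner_left, ← e.tsum_inner_mul_inner, tsum_eq_single n]
  · rw [adjoint_inner_left]
  · intro m hm
    rw [adjoint_inner_left, hT m n hm, zero_mul]

theorem norm_apply_le (hT : IsDiagonal e T) {C : ℝ} (hC : ∀ n, ‖⟪e n, T (e n)⟫_ℂ‖ ≤ C) (x : E) :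
    ‖T x‖ ≤ C * ‖x‖ := by
  have hC0 : 0 ≤ C := (norm_nonneg _).trans (hC 0)
  refine le_of_sq_le_sq ?_ (by positivity)
  rw [mul_pow]
  refine hasSum_le (fun n => ?_) (e.hasSum_norm_inner_sq (T x))
    ((e.hasSum_norm_inner_sq x).mul_left (C ^ 2))
  rw [hT.inner_apply, norm_mul, mul_pow]
  gcongr
  exact hC n

theorem isCompactOperator (hT : IsDiagonal e T)
    (hlim : Tendsto (fun n => ⟪e n, T (e n)⟫_ℂ) atTop (𝓝 0)) : IsCompactOperator T := by
  classical
  set F : ℕ → E →L[ℂ] E := fun N => T ∘L e.toSchauderBasis.proj N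
  have hF : ∀ N n, F N (e n) = if n < N then T (e n) else 0 := fun N n => by
    have := e.toSchauderBasis.proj_apply_basis_mem N n
    simp only [HilbertBasis.toSchauderBasis_basis] at this
    simp only [F, comp_apply]
    rw [this]
    split_ifs <;> simp
  have hFc : ∀ N, IsCompactOperator (F N) := fun N =>
    (e.toSchauderBasis.isCompactOperator_proj _).clm_comp T
  have hTF : ∀ N, IsDiagonal e (T - F N) := fun N =>
    hT.sub (.of_apply_basis (c := fun n => if n < N then ⟪e n, T (e n)⟫_ℂ else 0) fun n => by
      rw [hF]; split_ifs
      exacts [hT.apply_basis n, (zero_smul ℂ _).symm])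
  have hTF_entry : ∀ N n, ⟪e n, (T - F N) (e n)⟫_ℂ = if n < N then 0 else ⟪e n, T (e n)⟫_ℂ :=
    fun N n => by rw [sub_apply, hF]; split_ifs <;> simp
  refine isCompactOperator_of_tendsto (Metric.tendsto_atTop.mpr fun ε hε => ?_)
    (Eventually.of_forall hFc)
  obtain ⟨N₀, hN₀⟩ := Metric.tendsto_atTop.mp hlim (ε / 2) (half_pos hε)
  refine ⟨N₀, fun N hN => ?_⟩
  rw [dist_comm, dist_eq_norm]
  have hentry : ∀ n, ‖⟪e n, (T - F N) (e n)⟫_ℂ‖ ≤ ε / 2 := fun n => by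
    rw [hTF_entry]
    split_ifs with hn
    · simpa using (half_pos hε).le
    · simpa using (hN₀ n (hN.trans (not_lt.mp hn))).le
  calc ‖T - F N‖ ≤ ε / 2 := opNorm_le_bound _ (half_pos hε).le ((hTF N).norm_apply_le hentry)
    _ < ε := half_lt_self hε

end IsDiagonal

theorem projection_decomposition_general (e : HilbertBasis ℕ ℂ H)
    (P : H →L[ℂ] H) (hP : P ∈ DplusK e)
    (hPidem : IsIdempotentElem P) :
    ∃ E K : H →L[ℂ] H, IsDiagonal e E ∧ IsSelfAdjoint E ∧ IsIdempotentElem E ∧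
      (∀ n : ℕ, E (e n) = e n ∨ E (e n) = 0) ∧
      IsCompactOperator ⇑K ∧ P = E + K := by
  classical
  obtain ⟨D, K, hD, hK, rfl⟩ := hP
  set d : ℕ → ℂ := fun n => ⟪e n, D (e n)⟫_ℂ
  have hd : Tendsto (fun n => d n - d n ^ 2) atTop (𝓝 0) :=
    tendsto_sub_sq_of_isIdempotentElem hPidem e.orthonormal.1 hD.apply_basis
      (Nat.cofinite_eq_atTop ▸ hK.tendsto_apply_hilbertBasis e)
  set S : Set ℕ := {n | ‖d n - 1‖ < ‖d n‖}
  have hE : ∀ n, e.spanProj S (e n) = (if n ∈ S then 1 else 0 : ℂ) • e n := fun n => by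
    split_ifs with hn
    · rw [one_smul, e.spanProj_apply_of_mem hn]
    · rw [zero_smul, e.spanProj_apply_of_notMem hn]
  refine ⟨e.spanProj S, D + K - e.spanProj S, .of_apply_basis hE, e.isSelfAdjoint_spanProj S,
    e.isIdempotentElem_spanProj S, fun n => ?_, ?_, by abel⟩
  · by_cases hn : n ∈ S
    exacts [.inl (e.spanProj_apply_of_mem hn), .inr (e.spanProj_apply_of_notMem hn)]
  · rw [show D + K - e.spanProj S = D - e.spanProj S + K by abel]
    refine ((hD.sub (.of_apply_basis hE)).isCompactOperator ?_).add hK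
    convert tendsto_sub_round_of_tendsto_sub_sq hd using 2 with n
    rw [sub_apply, inner_sub_right, hE, inner_smul_right]
    simp [S, d, inner_self_eq_norm_sq_to_K, e.orthonormal.1 n]

/-- Every orthogonal projection `P ∈ D+K` decomposes as `P = E + K` with `E` a diagonal
orthogonal projection (diagonal entries in `{0,1}`) and `K` compact. -/
theorem projection_decomposition (e : HilbertBasis ℕ ℂ H)
    (P : H →L[ℂ] H) (hP : P ∈ DplusK e)
    (hPsa : IsSelfAdjoint P) (hPidem : IsIdempotentElem P) :
    ∃ E K : H →L[ℂ] H, IsDiagonal e E ∧ IsSelfAdjoint E ∧ IsIdempotentElem E ∧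
      (∀ n : ℕ, E (e n) = e n ∨ E (e n) = 0) ∧
      IsCompactOperator ⇑K ∧ P = E + K :=
  projection_decomposition_general e P hP hPidem
end
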